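/- Let (X_i)_{i≥1} be a sequence of i.i.d. ℝ^m-valued random vectors and let h : ℝ^d × ℝ^m → ℝ be a measurable function such that (i) almost surely, the map θ ∈ ℝ^d ↦ h(θ, X_1) is continuous, and (ii) for every M > 0, E(sup_{|θ|≤M} |h(θ, X_1)|) < ∞. Then almost surely, the functions θ ∈ ℝ^d ↦ (1/n) Σ_{i=1}^n h(θ, X_i) converge locally uniformly on ℝ^d, as n → ∞, to the continuous function θ ∈ ℝ^d ↦ E(h(θ, X_1)). -/

import Mathlib

/-!
On a compact parameter set `K`, almost every section `θ ↦ h θ x` is an element of the separable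
Banach space `C(K, ℝ)`, so the theorem is the strong law of large numbers in `C(K, ℝ)`. The section
map is made measurable by replacing it with the limit of the partition-of-unity interpolants
`∑ₜ h t x • Gₜ`. The set of `x` where this limit differs from the section is the projection of a
Borel set, hence analytic. Analytic sets are approximated from inside by compact sets, whose
preimages under `X 0` are `P`-null, so this set is null for the law of `X 0`, hence along every
`X i`. The balls `{nrm θ ≤ R + 1}` exhaust `ℝ^d`.
-/

open MeasureTheory ProbabilityTheory Filter Real Topology

noncomputable section

/-- Euclidean norm on `ℝ^k`. -/
def nrm {k : ℕ} (x : Fin k → ℝ) : ℝ := Real.sqrt (∑ i, x i ^ 2)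

/-- Euclidean inner (dot) product on `ℝ^k`. -/
def dot {k : ℕ} (x y : Fin k → ℝ) : ℝ := ∑ i, x i * y i

/-- The standard Gaussian measure on `ℝ^d`. -/
def stdGaussian (d : ℕ) : Measure (Fin d → ℝ) :=
  MeasureTheory.Measure.pi fun _ => ProbabilityTheory.gaussianReal 0 1

/-- `v^f(θ) = E(f²(G) e^{-θ·G + |θ|²/2})`. -/
def vF {d : ℕ} (f : (Fin d → ℝ) → ℝ) (θ : Fin d → ℝ) : ℝ :=
  ∫ x, f x ^ 2 * Real.exp (-(dot θ x) + nrm θ ^ 2 / 2) ∂ stdGaussian d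

/-- `v^{f,A}(ϑ) = v^f(Aϑ)`. -/
def vFA {d d' : ℕ} (A : Matrix (Fin d) (Fin d') ℝ) (f : (Fin d → ℝ) → ℝ)
    (ϑ : Fin d' → ℝ) : ℝ :=
  vF f (A.mulVec ϑ)

/-- The sample average approximation `v_n^{f,A}`. -/
def vnFA {d d' : ℕ} {Ω : Type*} (Gs : ℕ → Ω → Fin d → ℝ)
    (A : Matrix (Fin d) (Fin d') ℝ) (f : (Fin d → ℝ) → ℝ) (n : ℕ) (ω : Ω)
    (ϑ : Fin d' → ℝ) : ℝ :=
  (1 / n : ℝ) * ∑ i ∈ Finset.range n,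
    f (Gs i ω) ^ 2 * Real.exp (-(dot (A.mulVec ϑ) (Gs i ω)) + nrm (A.mulVec ϑ) ^ 2 / 2)

/-- The importance sampling estimator `M_n(θ, g)`. -/
def Mn {d : ℕ} {Ω : Type*} (Gs : ℕ → Ω → Fin d → ℝ) (n : ℕ) (θ : Fin d → ℝ)
    (g : (Fin d → ℝ) → ℝ) (ω : Ω) : ℝ :=
  (1 / n : ℝ) * ∑ i ∈ Finset.range n,
    g (Gs i ω + θ) * Real.exp (-(dot θ (Gs i ω)) - nrm θ ^ 2 / 2)

/-- The Hölder class `ℋ_α`. -/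
def MemH {d : ℕ} (α : ℝ) (g : (Fin d → ℝ) → ℝ) : Prop :=
  ∃ β ∈ Set.Ico (0 : ℝ) 2, ∃ lam > (0 : ℝ),
    (∀ x, |g x| ≤ lam * Real.exp (nrm x ^ β)) ∧
    ∀ x y, |g x - g y| ≤ lam * Real.exp (max (nrm x ^ β) (nrm y ^ β)) * nrm (x - y) ^ α

/-- `𝒜`-monotonicity of a function on `ℝ^d` for a vector `𝒜 ∈ ℝ^d`. -/
def AMonotonic {d : ℕ} (𝒜 : Fin d → ℝ) (h : (Fin d → ℝ) → ℝ) : Prop :=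
  (∀ x, Monotone fun ϑ : ℝ => h (x + ϑ • 𝒜)) ∨ (∀ x, Antitone fun ϑ : ℝ => h (x + ϑ • 𝒜))

/-- The class `𝒱_𝒜`. -/
def MemV {d : ℕ} (𝒜 : Fin d → ℝ) (h : (Fin d → ℝ) → ℝ) : Prop :=
  ∃ g₁ g₂ : (Fin d → ℝ) → ℝ, h = g₁ + g₂ ∧ AMonotonic 𝒜 g₁ ∧ AMonotonic 𝒜 g₂ ∧
    ∃ lam > (0 : ℝ), ∃ β ∈ Set.Ico (0 : ℝ) 2,
      ∀ x, |g₁ x| ≤ lam * Real.exp (nrm x ^ β) ∧ |g₂ x| ≤ lam * Real.exp (nrm x ^ β)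

open MeasureTheory ProbabilityTheory Filter Topology Set
open scoped ENNReal

lemma exists_measure_image_le_image_inter_add {α : Type*} [MeasurableSpace α]
    (μ : Measure α) [IsFiniteMeasure μ] (f : (ℕ → ℕ) → α) (A : Set (ℕ → ℕ)) (k : ℕ)
    {δ : ℝ≥0∞} (hδ : δ ≠ 0) :
    ∃ j : ℕ, μ (f '' A) ≤ μ (f '' (A ∩ {y | y k ≤ j})) + δ := by
  have hmono : Monotone fun j : ℕ => f '' (A ∩ {y | y k ≤ j}) :=
    fun a b hab => image_mono fun y hy => ⟨hy.1, hy.2.trans hab⟩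
  have hunion : ⋃ j : ℕ, f '' (A ∩ {y | y k ≤ j}) = f '' A := by
    rw [← image_iUnion, ← inter_iUnion, iUnion_eq_univ_iff.2 fun y => ⟨y k, le_refl (y k)⟩,
      inter_univ]
  have htends := (tendsto_measure_iUnion_atTop (μ := μ) hmono).add_const δ
  rw [hunion] at htends
  have hlt := ENNReal.lt_add_right (measure_ne_top μ (f '' A)) hδ
  exact (htends.eventually (lt_mem_nhds hlt)).exists.imp fun _ hj => hj.le

lemma exists_tendsto_subseq_of_forall_lt_le (n : ℕ → ℕ) {Y : ℕ → ℕ → ℕ}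
    (hY : ∀ k i, i < k → Y k i ≤ n i) :
    ∃ y ≤ n, ∃ φ : ℕ → ℕ, StrictMono φ ∧ Tendsto (Y ∘ φ) atTop (𝓝 y) := by
  set b : ℕ → ℕ := fun i => max (n i) ((Finset.range (i + 1)).sup fun k => Y k i)
  have hbox : IsCompact (Set.pi univ fun i => Iic (b i)) :=
    isCompact_univ_pi fun i => (finite_Iic _).isCompact
  have hYbox : ∀ k, Y k ∈ Set.pi univ fun i => Iic (b i) := by
    intro k i _
    rcases lt_or_ge i k with hik | hki
    · exact (hY k i hik).trans (le_max_left _ _)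
    · exact (Finset.le_sup (f := fun k => Y k i) (by simpa [Nat.lt_succ_iff])).trans
        (le_max_right _ _)
  obtain ⟨y, -, φ, hφ, hlim⟩ := hbox.tendsto_subseq hYbox
  refine ⟨y, fun i => ?_, φ, hφ, hlim⟩
  refine isClosed_Iic.mem_of_tendsto ((continuous_apply i).continuousAt.tendsto.comp hlim) ?_
  filter_upwards [eventually_gt_atTop i] with k hk
  exact hY (φ k) i (hk.trans_le hφ.le_apply)

theorem MeasureTheory.AnalyticSet.exists_isCompact_subset_measure_le_add {α : Type*}
    [MetricSpace α] [MeasurableSpace α] [OpensMeasurableSpace α] (μ : Measure α)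
    [IsFiniteMeasure μ] {S : Set α} (hS : AnalyticSet S) {ε : ℝ≥0∞} (hε : ε ≠ 0) :
    ∃ K ⊆ S, IsCompact K ∧ μ S ≤ μ K + ε := by
  rw [AnalyticSet] at hS
  rcases hS with rfl | ⟨f, hf, rfl⟩
  · exact ⟨∅, subset_rfl, isCompact_empty, by simp⟩
  obtain ⟨e, he, hesum⟩ := ENNReal.exists_pos_sum_of_countable hε ℕ
  choose N hN using fun k A =>
    exists_measure_image_le_image_inter_add μ f A k (ENNReal.coe_ne_zero.2 (he k).ne')
  -- `A k` bounds the first `k` coordinates, each bound chosen to lose mass at most `e k`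
  let A : ℕ → Set (ℕ → ℕ) := fun k => Nat.rec univ (fun k s => s ∩ {y | y k ≤ N k s}) k
  set n : ℕ → ℕ := fun k => N k (A k)
  have hA : ∀ k y, y ∈ A k ↔ ∀ i < k, y i ≤ n i := by
    intro k
    induction k with
    | zero => simp [A]
    | succ k ih =>
      intro y
      change y ∈ A k ∩ {y | y k ≤ n k} ↔ _
      rw [Nat.forall_lt_succ_right, ← ih]
      rfl
  have hmass : ∀ k, μ (range f) ≤ μ (f '' A k) + ∑ i ∈ Finset.range k, (e i : ℝ≥0∞) := by
    intro k
    induction k with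
    | zero => simp [A]
    | succ k ih =>
      calc μ (range f) ≤ μ (f '' A k) + ∑ i ∈ Finset.range k, (e i : ℝ≥0∞) := ih
        _ ≤ μ (f '' A (k + 1)) + e k + ∑ i ∈ Finset.range k, (e i : ℝ≥0∞) := by
          gcongr; exact hN k (A k)
        _ = μ (f '' A (k + 1)) + ∑ i ∈ Finset.range (k + 1), (e i : ℝ≥0∞) := by
          rw [Finset.sum_range_succ]; ring
  have hclosure : ∀ k, μ (range f) ≤ μ (closure (f '' A k)) + ε := fun k =>
    (hmass k).trans (add_le_add (measure_mono subset_closure)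
      ((ENNReal.sum_le_tsum _).trans hesum.le))
  have hanti : Antitone fun k => closure (f '' A k) :=
    antitone_nat_of_succ_le fun k => closure_mono (image_mono inter_subset_left)
  have hinter : ⋂ k, closure (f '' A k) ⊆ f '' {y | y ≤ n} := by
    intro x hx
    have hnear : ∀ k : ℕ, ∃ y ∈ A k, dist (f y) x < 1 / (k + 1) := fun k => by
      obtain ⟨_, ⟨y, hy, rfl⟩, hxy⟩ :=
        Metric.mem_closure_iff.1 (mem_iInter.1 hx k) _ Nat.one_div_pos_of_nat
      exact ⟨y, hy, by rwa [dist_comm]⟩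
    choose Y hYA hYx using hnear
    obtain ⟨y, hyn, φ, hφ, hlim⟩ :=
      exists_tendsto_subseq_of_forall_lt_le n fun k => (hA k (Y k)).1 (hYA k)
    refine ⟨y, hyn, tendsto_nhds_unique ((hf.tendsto y).comp hlim) ?_⟩
    refine tendsto_iff_dist_tendsto_zero.2 (squeeze_zero (fun _ => dist_nonneg)
      (fun k => (hYx (φ k)).le) ?_)
    exact tendsto_one_div_add_atTop_nhds_zero_nat.comp hφ.tendsto_atTop
  have hbox : IsCompact {y : ℕ → ℕ | y ≤ n} := by
    simpa [Set.pi, Pi.le_def] using isCompact_univ_pi fun i => (finite_Iic (n i)).isCompact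
  refine ⟨f '' {y | y ≤ n}, image_subset_range _ _, hbox.image hf, ?_⟩
  have hlim := tendsto_measure_iInter_atTop (μ := μ)
    (fun k => isClosed_closure.measurableSet.nullMeasurableSet) hanti ⟨0, measure_ne_top μ _⟩
  calc μ (range f) ≤ μ (⋂ k, closure (f '' A k)) + ε :=
        ge_of_tendsto' (hlim.add_const ε) hclosure
    _ ≤ μ (f '' {y | y ≤ n}) + ε := by gcongr

namespace ContinuousMap

variable {X : Type*} [MetricSpace X] [CompactSpace X]

theorem exists_dist_sum_smul_le {δ : ℝ} (hδ : 0 < δ) :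
    ∃ (T : Finset X) (G : T → C(X, ℝ)), ∀ (u : C(X, ℝ)) {ε : ℝ}, 0 ≤ ε →
      (∀ x y, dist x y < δ → dist (u x) (u y) ≤ ε) → dist (∑ t : T, u t • G t) u ≤ ε := by
  classical
  obtain ⟨T, -, hT⟩ := isCompact_univ.elim_nhds_subcover (fun x : X => Metric.ball x δ)
    fun x _ => Metric.ball_mem_nhds x hδ
  obtain ⟨ρ, hρ⟩ := PartitionOfUnity.exists_isSubordinate isClosed_univ
    (fun t : T => Metric.ball (t : X) δ) (fun _ => Metric.isOpen_ball)
    (fun x _ => by simpa using hT (mem_univ x))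
  refine ⟨T, fun t => ρ t, fun u ε hε hu => (dist_le hε).2 fun x => ?_⟩
  have := ρ.finsum_smul_mem_convex (g := fun t _ => u t) (mem_univ x)
    (fun t ht => Metric.mem_closedBall.2 ((dist_comm _ _).trans_le
      (hu _ _ (hρ t (subset_closure ht))))) (convex_closedBall (u x) ε)
  simpa [finsum_eq_sum_of_fintype, mul_comm, Metric.mem_closedBall] using this

theorem exists_tendsto_sum_smul :
    ∃ (T : ℕ → Finset X) (G : ∀ j, T j → C(X, ℝ)), ∀ u : C(X, ℝ),
      Tendsto (fun j => ∑ t : T j, u t • G j t) atTop (𝓝 u) := by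
  choose T G hTG using fun j : ℕ =>
    exists_dist_sum_smul_le (X := X) (Nat.one_div_pos_of_nat (n := j))
  refine ⟨T, G, fun u => Metric.tendsto_atTop.2 fun ε hε => ?_⟩
  obtain ⟨δ, hδ, hu⟩ := Metric.uniformContinuous_iff.1
    (CompactSpace.uniformContinuous_of_continuous u.continuous) (ε / 2) (half_pos hε)
  obtain ⟨J, hJ⟩ := exists_nat_one_div_lt hδ
  refine ⟨J, fun j hj => (hTG j u (half_pos hε).le fun x y hxy => (hu ?_).le).trans_lt
    (half_lt_self hε)⟩
  calc dist x y < 1 / (j + 1) := hxy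
    _ ≤ 1 / (J + 1) := by gcongr
    _ < δ := hJ

theorem exists_measurable_eq_of_continuous {Y : Type*} [MeasurableSpace Y]
    [MeasurableSpace C(X, ℝ)] [BorelSpace C(X, ℝ)] (H : X → Y → ℝ)
    (hH : ∀ x, Measurable (H x)) :
    ∃ Φ : Y → C(X, ℝ), Measurable Φ ∧ ∀ y, Continuous (H · y) → ∀ x, Φ y x = H x y := by
  obtain ⟨T, G, hTG⟩ := exists_tendsto_sum_smul (X := X)
  refine ⟨fun y => limUnder atTop fun j => ∑ t : T j, H t y • G j t, ?_, fun y hy x => ?_⟩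
  · refine (StronglyMeasurable.limUnder fun j => ?_).measurable
    exact Finset.stronglyMeasurable_fun_sum _ fun (t : T j) _ =>
      (hH t).stronglyMeasurable.smul_const (G j t)
  · exact congr($((hTG ⟨(H · y), hy⟩).limUnder_eq) x)

end ContinuousMap

section UniformStrongLaw

variable {Ω K Y : Type*} [MeasurableSpace Ω] {P : Measure Ω} [IsFiniteMeasure P]
  [MetricSpace K] [CompactSpace K] [MeasurableSpace K] [BorelSpace K]
  [TopologicalSpace Y] [PolishSpace Y] [MeasurableSpace Y] [BorelSpace Y]
  {X : ℕ → Ω → Y} {H : K → Y → ℝ}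

lemma ae_forall_apply_eq_of_identDistrib [MeasurableSpace C(K, ℝ)] [BorelSpace C(K, ℝ)]
    (hid : ∀ i, IdentDistrib (X i) (X 0) P P) (hH : Measurable (Function.uncurry H))
    (hcont : ∀ᵐ ω ∂P, Continuous fun t => H t (X 0 ω)) {Φ : Y → C(K, ℝ)} (hΦ : Measurable Φ)
    (hΦH : ∀ y, Continuous (H · y) → ∀ t, Φ y t = H t y) (i : ℕ) :
    ∀ᵐ ω ∂P, ∀ t, Φ (X i ω) t = H t (X i ω) := by
  let := TopologicalSpace.metrizableSpaceMetric Y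
  -- `B` is analytic but possibly not Borel: its nullity is read off its compact subsets, and
  -- then passes from `X 0` to `X i` through outer measures.
  set B := {y | ∃ t, Φ y t ≠ H t y}
  have hB : AnalyticSet B := by
    have hB' : B = Prod.snd '' {p : K × Y | Φ p.2 p.1 ≠ H p.1 p.2} := by ext y; simp [B]
    rw [hB']
    refine MeasurableSet.analyticSet_image ?_ measurable_snd
    exact (measurableSet_eq_fun (continuous_eval.measurable.comp
      ((hΦ.comp measurable_snd).prodMk measurable_fst)) hH).compl
  have hcompact : ∀ F ⊆ B, IsCompact F → P.map (X 0) F = 0 := by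
    intro F hFB hF
    rw [Measure.map_apply_of_aemeasurable (hid 0).aemeasurable_fst hF.measurableSet]
    refine measure_mono_null ?_ (ae_iff.1 hcont)
    intro ω hω hc
    obtain ⟨t, ht⟩ := hFB hω
    exact ht (hΦH _ hc t)
  have hnull : P.map (X 0) B = 0 := by
    refine le_antisymm (ENNReal.le_of_forall_pos_le_add fun ε hε _ => ?_) bot_le
    obtain ⟨F, hFB, hF, hle⟩ :=
      hB.exists_isCompact_subset_measure_le_add (P.map (X 0)) (ENNReal.coe_ne_zero.2 hε.ne')
    simpa [hcompact F hFB hF] using hle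
  rw [ae_iff]
  refine measure_mono_null (fun ω hω => not_forall.1 hω) ?_
  exact nonpos_iff_eq_zero.1 ((Measure.le_map_apply (hid i).aemeasurable_fst B).trans
    ((hid i).map_eq ▸ hnull.le))

theorem strong_law_ae_tendstoUniformly
    (hindep : Pairwise fun i j => IndepFun (X i) (X j) P)
    (hid : ∀ i, IdentDistrib (X i) (X 0) P P) (hH : Measurable (Function.uncurry H))
    (hcont : ∀ᵐ ω ∂P, Continuous fun t => H t (X 0 ω))
    (hint : Integrable (fun ω => ⨆ t, |H t (X 0 ω)|) P) :
    ∀ᵐ ω ∂P, TendstoUniformly (fun (n : ℕ) t => (1 / n : ℝ) * ∑ i ∈ Finset.range n, H t (X i ω))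
        (fun t => ∫ ω', H t (X 0 ω') ∂P) atTop ∧ Continuous fun t => ∫ ω', H t (X 0 ω') ∂P := by
  borelize C(K, ℝ)
  obtain ⟨Φ, hΦ, hΦH⟩ := ContinuousMap.exists_measurable_eq_of_continuous H
    fun t => hH.comp (measurable_const.prodMk measurable_id)
  have hagree : ∀ᵐ ω ∂P, ∀ i t, Φ (X i ω) t = H t (X i ω) :=
    ae_all_iff.2 (ae_forall_apply_eq_of_identDistrib hid hH hcont hΦ hΦH)
  have hΦint : Integrable (fun ω => Φ (X 0 ω)) P := by
    refine hint.mono' (hΦ.comp_aemeasurable (hid 0).aemeasurable_fst).aestronglyMeasurable ?_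
    filter_upwards [hagree] with ω hω
    simp [ContinuousMap.norm_eq_iSup_norm, hω 0]
  have hmean : ∀ t, (∫ ω, Φ (X 0 ω) ∂P) t = ∫ ω, H t (X 0 ω) ∂P := fun t =>
    (ContinuousMap.integral_apply hΦint t).trans
      (integral_congr_ae (by filter_upwards [hagree] with ω hω using hω 0 t))
  have hslln := strong_law_ae (fun i ω => Φ (X i ω)) hΦint
    (fun i j hij => (hindep hij).comp hΦ hΦ) fun i => (hid i).comp hΦ
  filter_upwards [hagree, hslln] with ω hω hlim
  rw [show (fun t => ∫ ω', H t (X 0 ω') ∂P) = ⇑(∫ ω, Φ (X 0 ω) ∂P) from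
    funext fun t => (hmean t).symm]
  refine ⟨?_, map_continuous _⟩
  convert ContinuousMap.tendsto_iff_tendstoUniformly.1 hlim using 1
  ext n t
  simp [hω]

end UniformStrongLaw

lemma nrm_eq_norm_toLp {k : ℕ} (x : Fin k → ℝ) : nrm x = ‖WithLp.toLp 2 x‖ := by
  simp [nrm, EuclideanSpace.norm_eq]

lemma continuous_nrm {k : ℕ} : Continuous (nrm : (Fin k → ℝ) → ℝ) := by
  simpa only [funext nrm_eq_norm_toLp] using (PiLp.continuous_toLp 2 _).norm

lemma isCompact_setOf_nrm_le {k : ℕ} (M : ℝ) : IsCompact {θ : Fin k → ℝ | nrm θ ≤ M} := by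
  convert (isCompact_closedBall (0 : EuclideanSpace ℝ (Fin k)) M).image
    (PiLp.continuous_ofLp 2 _)
  ext θ
  exact ⟨fun hθ => ⟨WithLp.toLp 2 θ, by simpa [nrm_eq_norm_toLp] using hθ, rfl⟩,
    by rintro ⟨x, hx, rfl⟩; simpa [nrm_eq_norm_toLp] using hx⟩

instance {k : ℕ} (M : ℝ) : CompactSpace {θ : Fin k → ℝ | nrm θ ≤ M} :=
  isCompact_iff_compactSpace.1 (isCompact_setOf_nrm_le M)

/-- Uniform strong law of large numbers: for i.i.d. `(X_i)` and `h(θ, x)` a.s. continuous in `θ`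
with locally integrable sup, a.s. `θ ↦ (1/n) Σ_{i<n} h(θ, X_i)` converges locally uniformly to
the continuous function `θ ↦ E(h(θ, X_1))`. -/
theorem stmt4 {d m : ℕ}
    {Ω : Type*} [MeasurableSpace Ω] (P : Measure Ω) [IsProbabilityMeasure P]
    (X : ℕ → Ω → Fin m → ℝ)
    (hXmeas : ∀ i, Measurable (X i))
    (hXindep : iIndepFun X P)
    (hXid : ∀ i, Measure.map (X i) P = Measure.map (X 0) P)
    (h : (Fin d → ℝ) → (Fin m → ℝ) → ℝ)
    (hmeas : Measurable (Function.uncurry h))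
    (hcont : ∀ᵐ ω ∂P, Continuous fun θ => h θ (X 0 ω))
    (hint : ∀ M > (0 : ℝ),
      Integrable (fun ω => ⨆ θ : {θ : Fin d → ℝ // nrm θ ≤ M}, |h (θ : Fin d → ℝ) (X 0 ω)|) P) :
    ∀ᵐ ω ∂P,
      TendstoLocallyUniformly
        (fun (n : ℕ) (θ : Fin d → ℝ) => (1 / n : ℝ) * ∑ i ∈ Finset.range n, h θ (X i ω))
        (fun θ => ∫ ω', h θ (X 0 ω') ∂P) atTop ∧
      Continuous fun θ => ∫ ω', h θ (X 0 ω') ∂P := by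
  have hball : ∀ R : ℕ, ∀ᵐ ω ∂P,
      TendstoUniformlyOn (fun (n : ℕ) θ => (1 / n : ℝ) * ∑ i ∈ Finset.range n, h θ (X i ω))
        (fun θ => ∫ ω', h θ (X 0 ω') ∂P) atTop {θ | nrm θ ≤ R + 1} ∧
      ContinuousOn (fun θ => ∫ ω', h θ (X 0 ω') ∂P) {θ | nrm θ ≤ R + 1} := fun R => by
    simp only [tendstoUniformlyOn_iff_tendstoUniformly_comp_coe,
      continuousOn_iff_continuous_domRestrict]
    exact strong_law_ae_tendstoUniformly (K := {θ : Fin d → ℝ | nrm θ ≤ R + 1})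
      (H := fun θ x => h θ x)
      (fun i j hij => hXindep.indepFun hij)
      (fun i => ⟨(hXmeas i).aemeasurable, (hXmeas 0).aemeasurable, hXid i⟩)
      (hmeas.comp (measurable_subtype_coe.prodMap measurable_id))
      (hcont.mono fun ω hω => hω.comp continuous_subtype_val) (hint _ (by positivity))
  have hnhds : ∀ θ : Fin d → ℝ, ∃ R : ℕ, {θ' | nrm θ' ≤ R + 1} ∈ 𝓝 θ := fun θ =>
    ⟨⌈nrm θ⌉₊, mem_of_superset ((isOpen_lt continuous_nrm continuous_const).mem_nhds
      (show nrm θ < _ from (Nat.le_ceil _).trans_lt (lt_add_one _)))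
      fun θ' (hθ' : nrm θ' < _) => hθ'.le⟩
  filter_upwards [ae_all_iff.2 hball] with ω hω
  refine ⟨tendstoLocallyUniformly_of_forall_exists_nhds fun θ => ?_,
    continuous_iff_continuousAt.2 fun θ => ?_⟩
  · obtain ⟨R, hR⟩ := hnhds θ
    exact ⟨_, hR, (hω R).1⟩
  · obtain ⟨R, hR⟩ := hnhds θ
    exact (hω R).2.continuousAt hR

end
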